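/- For fixed x ∈ ℝⁿ and t, the function (ξ,τ) ↦ ε_{m,n}(x−ξ, t−τ) satisfies (−∂/∂τ − Δ_ξ)^m ε_{m,n}(x−ξ, t−τ) = 0 for all τ < t and ξ ∈ ℝⁿ. -/

import Mathlib

open Real MeasureTheory Filter Topology Set

noncomputable def eps (n m : ℕ) (x : EuclideanSpace ℝ (Fin n)) (t : ℝ) : ℝ :=
  t ^ (m - 1) * (4 * Real.pi * t) ^ (-(n : ℝ) / 2) * Real.exp (-‖x‖ ^ 2 / (4 * t))

noncomputable def lap {n : ℕ} (u : EuclideanSpace ℝ (Fin n) → ℝ)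
    (x : EuclideanSpace ℝ (Fin n)) : ℝ :=
  ∑ i : Fin n, iteratedDeriv 2 (fun s : ℝ => u (x + s • EuclideanSpace.single i 1)) 0

/-- The heat operator ◇ = ∂/∂t − Δ_x. -/
noncomputable def heatOp {n : ℕ} (u : EuclideanSpace ℝ (Fin n) → ℝ → ℝ) :
    EuclideanSpace ℝ (Fin n) → ℝ → ℝ :=
  fun x t => deriv (u x) t - lap (fun y => u y t) x

/-- The adjoint heat operator ◇⁺ = −∂/∂τ − Δ_ξ. -/
noncomputable def adjOp {n : ℕ} (w : EuclideanSpace ℝ (Fin n) → ℝ → ℝ) :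
    EuclideanSpace ℝ (Fin n) → ℝ → ℝ :=
  fun ξ τ => -deriv (w ξ) τ - lap (fun y => w y τ) ξ

/-!
Write `Γ(y, c) = (4πc)^{-n/2} exp(-|y|²/(4c))`, so that `ε_{k+1,n}(y, c) = c^k Γ(y, c)`. Because `Γ`
solves the heat equation `∂_c Γ = Δ_y Γ`, the reflected kernel `Γ(x - ξ, t - τ)` is annihilated by
`◇⁺`, and Leibniz's rule gives `◇⁺((t - τ)^k Γ) = k (t - τ)^{k-1} Γ`. Each application of `◇⁺` thus
lowers the power of `t - τ` by one, and `k + 1` of them give zero. As `◇⁺` is local in `τ`, these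
identities only need to hold on the open set `τ ≠ t`.
-/
noncomputable def heatKernel (n : ℕ) (y : EuclideanSpace ℝ (Fin n)) (c : ℝ) : ℝ :=
  (4 * π * c) ^ (-(n : ℝ) / 2) * exp (-‖y‖ ^ 2 / (4 * c))

lemma eps_eq_pow_mul_heatKernel (n m : ℕ) (y : EuclideanSpace ℝ (Fin n)) (c : ℝ) :
    eps n m y c = c ^ (m - 1) * heatKernel n y c := by
  rw [eps, heatKernel, mul_assoc]

lemma iteratedDeriv_two_exp_quadratic (a b d : ℝ) :
    iteratedDeriv 2 (fun s => exp (a + b * s + d * s ^ 2)) 0 = (b ^ 2 + 2 * d) * exp a := by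
  have hq (s : ℝ) : HasDerivAt (fun s => a + b * s + d * s ^ 2) (b + 2 * d * s) s :=
    ((((hasDerivAt_id' s).const_mul b).const_add a).fun_add
      ((hasDerivAt_pow 2 s).const_mul d)).congr_deriv (by norm_num; ring)
  have hderiv : deriv (fun s => exp (a + b * s + d * s ^ 2))
      = fun s => exp (a + b * s + d * s ^ 2) * (b + 2 * d * s) :=
    funext fun s => (hq s).exp.deriv
  have hlin : HasDerivAt (fun s : ℝ => b + 2 * d * s) (2 * d) 0 := by
    simpa using ((hasDerivAt_id (0 : ℝ)).const_mul (2 * d)).const_add b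
  rw [iteratedDeriv_succ, iteratedDeriv_one, hderiv, ((hq 0).exp.fun_mul hlin).deriv]
  simp only [mul_zero, add_zero, zero_pow two_ne_zero]
  ring

section Laplacian

variable {n : ℕ}

lemma lap_const_mul (a : ℝ) (u : EuclideanSpace ℝ (Fin n) → ℝ) (x : EuclideanSpace ℝ (Fin n)) :
    lap (fun y => a * u y) x = a * lap u x := by
  simp only [lap, iteratedDeriv_const_mul_field, Finset.mul_sum]

lemma lap_comp_const_sub (u : EuclideanSpace ℝ (Fin n) → ℝ) (x ξ : EuclideanSpace ℝ (Fin n)) :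
    lap (fun y => u (x - y)) ξ = lap u (x - ξ) := by
  refine Finset.sum_congr rfl fun i _ => ?_
  set v : ℝ → ℝ := fun s => u (x - ξ + s • EuclideanSpace.single i 1)
  have hflip : (fun s : ℝ => u (x - (ξ + s • EuclideanSpace.single i 1))) = fun s => v (-s) := by
    funext s
    simp only [v, neg_smul]
    congr 1
    abel
  rw [hflip, iteratedDeriv_comp_neg]
  simp

lemma heatKernel_add_smul_single (y : EuclideanSpace ℝ (Fin n)) (i : Fin n) (c s : ℝ) :
    heatKernel n (y + s • EuclideanSpace.single i 1) c
      = (4 * π * c) ^ (-(n : ℝ) / 2) *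
        exp (-‖y‖ ^ 2 / (4 * c) + -(y i / (2 * c)) * s + -(1 / (4 * c)) * s ^ 2) := by
  rw [heatKernel, norm_add_sq_real, inner_smul_right, EuclideanSpace.inner_single_right,
    norm_smul, PiLp.norm_single]
  congr 2
  simp only [conj_trivial, norm_one, Real.norm_eq_abs, mul_one, sq_abs]
  ring

lemma lap_heatKernel (y : EuclideanSpace ℝ (Fin n)) (c : ℝ) :
    lap (fun z => heatKernel n z c) y = (‖y‖ ^ 2 / (4 * c ^ 2) - n / (2 * c)) * heatKernel n y c := by
  simp only [lap, heatKernel_add_smul_single, iteratedDeriv_const_mul_field,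
    iteratedDeriv_two_exp_quadratic]
  rw [heatKernel]
  simp only [← Finset.sum_mul, ← Finset.mul_sum, Finset.sum_add_distrib, Finset.sum_const,
    Finset.card_univ, Fintype.card_fin, nsmul_eq_mul, neg_sq, div_pow]
  rw [EuclideanSpace.real_norm_sq_eq y, ← Finset.sum_div]
  ring

lemma hasDerivAt_heatKernel (y : EuclideanSpace ℝ (Fin n)) {c : ℝ} (hc : c ≠ 0) :
    HasDerivAt (heatKernel n y) ((‖y‖ ^ 2 / (4 * c ^ 2) - n / (2 * c)) * heatKernel n y c) c := by
  have h4πc : 4 * π * c ≠ 0 := by positivity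
  have hpow := ((hasDerivAt_id' c).const_mul (4 * π)).rpow_const (p := -(n : ℝ) / 2) (.inl h4πc)
  have hexp := ((hasDerivAt_const c (-‖y‖ ^ 2)).fun_div ((hasDerivAt_id' c).const_mul 4)
    (by positivity)).exp
  refine (hpow.fun_mul hexp).congr_deriv ?_
  rw [heatKernel, rpow_sub_one h4πc]
  field_simp
  ring

lemma heatKernel_hasDerivAt_lap (y : EuclideanSpace ℝ (Fin n)) {c : ℝ} (hc : c ≠ 0) :
    HasDerivAt (heatKernel n y) (lap (fun z => heatKernel n z c) y) c :=
  lap_heatKernel y c ▸ hasDerivAt_heatKernel y hc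

end Laplacian

section AdjointHeatOperator

variable {n : ℕ}

lemma adjOp_const_mul (a : ℝ) (w : EuclideanSpace ℝ (Fin n) → ℝ → ℝ) :
    adjOp (fun ξ τ => a * w ξ τ) = fun ξ τ => a * adjOp w ξ τ := by
  funext ξ τ
  simp only [adjOp, deriv_const_mul_field, lap_const_mul]
  ring

lemma adjOp_iterate_const_mul (a : ℝ) (k : ℕ) (w : EuclideanSpace ℝ (Fin n) → ℝ → ℝ) :
    adjOp^[k] (fun ξ τ => a * w ξ τ) = fun ξ τ => a * adjOp^[k] w ξ τ := by
  induction k generalizing w with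
  | zero => rfl
  | succ k ih =>
    rw [Function.iterate_succ_apply, Function.iterate_succ_apply, adjOp_const_mul, ih]

lemma adjOp_congr_of_isOpen {S : Set ℝ} (hS : IsOpen S) {w₁ w₂ : EuclideanSpace ℝ (Fin n) → ℝ → ℝ}
    (h : ∀ ξ, ∀ τ ∈ S, w₁ ξ τ = w₂ ξ τ) (ξ : EuclideanSpace ℝ (Fin n)) {τ : ℝ} (hτ : τ ∈ S) :
    adjOp w₁ ξ τ = adjOp w₂ ξ τ := by
  have hderiv : deriv (w₁ ξ) τ = deriv (w₂ ξ) τ :=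
    EventuallyEq.deriv_eq (eventually_of_mem (hS.mem_nhds hτ) (h ξ))
  have hslice : (fun y => w₁ y τ) = fun y => w₂ y τ := funext fun y => h y τ hτ
  simp only [adjOp, hderiv, hslice]

lemma adjOp_iterate_congr_of_isOpen {S : Set ℝ} (hS : IsOpen S) (k : ℕ)
    {w₁ w₂ : EuclideanSpace ℝ (Fin n) → ℝ → ℝ} (h : ∀ ξ, ∀ τ ∈ S, w₁ ξ τ = w₂ ξ τ) :
    ∀ ξ, ∀ τ ∈ S, adjOp^[k] w₁ ξ τ = adjOp^[k] w₂ ξ τ := by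
  induction k generalizing w₁ w₂ with
  | zero => exact h
  | succ k ih => exact ih fun ξ _ hτ => adjOp_congr_of_isOpen hS h ξ hτ

lemma adjOp_sub_pow_mul (t : ℝ) (k : ℕ) {w : EuclideanSpace ℝ (Fin n) → ℝ → ℝ}
    {ξ : EuclideanSpace ℝ (Fin n)} {τ : ℝ} (hw : DifferentiableAt ℝ (w ξ) τ) :
    adjOp (fun ξ' τ' => (t - τ') ^ k * w ξ' τ') ξ τ
      = k * (t - τ) ^ (k - 1) * w ξ τ + (t - τ) ^ k * adjOp w ξ τ := by
  have hpow := ((hasDerivAt_id' τ).const_sub t).fun_pow k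
  simp only [adjOp, lap_const_mul, (hpow.fun_mul hw.hasDerivAt).deriv]
  ring

lemma adjOp_heatKernel_sub (x : EuclideanSpace ℝ (Fin n)) (t : ℝ) (ξ : EuclideanSpace ℝ (Fin n))
    {τ : ℝ} (hτ : τ ≠ t) : adjOp (fun ξ' τ' => heatKernel n (x - ξ') (t - τ')) ξ τ = 0 := by
  have hderiv : HasDerivAt (fun τ' => heatKernel n (x - ξ) (t - τ'))
      (lap (fun y => heatKernel n y (t - τ)) (x - ξ) * -1) τ :=
    (heatKernel_hasDerivAt_lap (x - ξ) (sub_ne_zero.2 hτ.symm)).comp τ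
      ((hasDerivAt_id' τ).const_sub t)
  simp only [adjOp, hderiv.deriv, lap_comp_const_sub (fun y => heatKernel n y (t - τ))]
  ring

end AdjointHeatOperator

/-- `ε_{k+1,n}(x - ξ, t - τ)`, indexed by `k = m - 1` to avoid truncated subtraction. -/
noncomputable def weightedHeatKernel (n k : ℕ) (x : EuclideanSpace ℝ (Fin n)) (t : ℝ) :
    EuclideanSpace ℝ (Fin n) → ℝ → ℝ :=
  fun ξ τ => (t - τ) ^ k * heatKernel n (x - ξ) (t - τ)

section WeightedHeatKernel

variable {n : ℕ} (x : EuclideanSpace ℝ (Fin n)) (t : ℝ)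

lemma adjOp_weightedHeatKernel (k : ℕ) (ξ : EuclideanSpace ℝ (Fin n)) {τ : ℝ} (hτ : τ ≠ t) :
    adjOp (weightedHeatKernel n k x t) ξ τ = k * weightedHeatKernel n (k - 1) x t ξ τ := by
  have hdiff : DifferentiableAt ℝ (fun τ' => heatKernel n (x - ξ) (t - τ')) τ :=
    ((heatKernel_hasDerivAt_lap (x - ξ) (sub_ne_zero.2 hτ.symm)).differentiableAt).comp τ
      (differentiableAt_id.const_sub t)
  calc adjOp (weightedHeatKernel n k x t) ξ τ
      = k * (t - τ) ^ (k - 1) * heatKernel n (x - ξ) (t - τ)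
        + (t - τ) ^ k * adjOp (fun ξ' τ' => heatKernel n (x - ξ') (t - τ')) ξ τ :=
        adjOp_sub_pow_mul t k hdiff
    _ = k * weightedHeatKernel n (k - 1) x t ξ τ := by
        rw [adjOp_heatKernel_sub x t ξ hτ, weightedHeatKernel]
        ring

lemma adjOp_iterate_weightedHeatKernel (k : ℕ) (ξ : EuclideanSpace ℝ (Fin n)) {τ : ℝ}
    (hτ : τ ≠ t) : adjOp^[k + 1] (weightedHeatKernel n k x t) ξ τ = 0 := by
  induction k generalizing ξ τ with
  | zero => simp [adjOp_weightedHeatKernel x t 0 ξ hτ]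
  | succ k ih =>
    have hstep : ∀ ξ', ∀ τ' ∈ ({t}ᶜ : Set ℝ), adjOp (weightedHeatKernel n (k + 1) x t) ξ' τ'
        = (k + 1 : ℝ) * weightedHeatKernel n k x t ξ' τ' := fun ξ' τ' hτ' => by
      simpa using adjOp_weightedHeatKernel x t (k + 1) ξ' hτ'
    rw [Function.iterate_succ_apply,
      adjOp_iterate_congr_of_isOpen isOpen_compl_singleton (k + 1) hstep ξ τ hτ,
      adjOp_iterate_const_mul]
    exact mul_eq_zero_of_right _ (ih ξ hτ)

end WeightedHeatKernel

theorem stmt_4 (n m : ℕ) (hm : 1 ≤ m) (x : EuclideanSpace ℝ (Fin n)) (t : ℝ)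
    (ξ : EuclideanSpace ℝ (Fin n)) (τ : ℝ) (hτ : τ < t) :
    (adjOp)^[m] (fun ξ' τ' => eps n m (x - ξ') (t - τ')) ξ τ = 0 := by
  obtain ⟨k, rfl⟩ := Nat.exists_eq_add_of_le' hm
  have heps : (fun ξ' τ' => eps n (k + 1) (x - ξ') (t - τ')) = weightedHeatKernel n k x t := by
    funext ξ' τ'
    rw [eps_eq_pow_mul_heatKernel, Nat.add_sub_cancel, weightedHeatKernel]
  rw [heps]
  exact adjOp_iterate_weightedHeatKernel x t k ξ hτ.ne
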